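/- Let T > 0 and λ > 0. Let h : ℝ × ℝ → ℝ be continuous, T-periodic in the first variable, and satisfy (h0) and (h1). Let a : ℝ → ℝ be a locally integrable T-periodic function. Let g : [0,+∞) → [0,+∞) be continuously differentiable with g(s) > 0 and g'(s) > 0 for every s > 0. If (u,v) is a T-periodic solution of the system u' = h(t,v), v' = -λ a(t) g(u) with u(t) > 0 for all t ∈ ℝ and v not identically zero, then ∫₀ᵀ a(t) dt < 0. -/

import Mathlib

/-!
Divide `v' = -λ a(t) g(u)` by `g(u)` and integrate over a period. Integrating by parts
(`v` is absolutely continuous, `1 / g(u)` is `C¹` with derivative `-g'(u) h(t,v) / g(u)²`)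
and using periodicity to kill the boundary term gives
`-λ ∫₀ᵀ a = ∫₀ᵀ v h(t,v) g'(u) / g(u)²`.
The integrand is nonnegative because `s h(t,s) ≥ 0`, and positive wherever `v ≠ 0`.
-/

open MeasureTheory Set Filter

noncomputable section

/-- `(u, v)` is a `T`-periodic solution of the planar system `u' = F t (v t)`,
`v' = G t (u t)`: both components are continuous, `T`-periodic, and are primitives
(in the sense of the integral form, equivalent to absolute continuity plus the
differential equations holding almost everywhere) of the right-hand sides. -/
def IsPeriodicSol (T : ℝ) (F G : ℝ → ℝ → ℝ) (u v : ℝ → ℝ) : Prop :=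
  Continuous u ∧ Continuous v ∧
  Function.Periodic u T ∧ Function.Periodic v T ∧
  (∀ t₁ t₂ : ℝ, IntervalIntegrable (fun s => F s (v s)) volume t₁ t₂) ∧
  (∀ t₁ t₂ : ℝ, IntervalIntegrable (fun s => G s (u s)) volume t₁ t₂) ∧
  (∀ t : ℝ, u t = u 0 + ∫ s in (0:ℝ)..t, F s (v s)) ∧
  (∀ t : ℝ, v t = v 0 + ∫ s in (0:ℝ)..t, G s (u s))

theorem hasDerivAt_of_eq_add_integral {f u : ℝ → ℝ} {a : ℝ} (hf : Continuous f)
    (hu : ∀ t, u t = u a + ∫ s in a..t, f s) (t : ℝ) : HasDerivAt u (f t) t := by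
  rw [funext hu]
  exact ((hf.integral_hasStrictDerivAt a t).hasDerivAt).const_add _

theorem integral_mul_eq_sub_sub_of_eq_add_integral {f v φ φ' : ℝ → ℝ} {a b : ℝ}
    (hf : IntervalIntegrable f volume a b) (hv : ∀ t, v t = v a + ∫ s in a..t, f s)
    (hφ : ∀ t, HasDerivAt φ (φ' t) t) (hφ' : Continuous φ') :
    ∫ t in a..b, f t * φ t = v b * φ b - v a * φ a - ∫ t in a..b, v t * φ' t := by
  have hvAC : AbsolutelyContinuousOnInterval v a b := by
    rw [funext hv]
    exact contDiffOn_const.absolutelyContinuousOnInterval.add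
      (hf.absolutelyContinuousOnInterval_intervalIntegral left_mem_uIcc)
  have hderiv_φ : deriv φ = φ' := funext fun t => (hφ t).deriv
  have hφAC : AbsolutelyContinuousOnInterval φ a b :=
    (contDiff_one_iff_deriv.2 ⟨fun t => (hφ t).differentiableAt, hderiv_φ ▸ hφ'⟩).contDiffOn
      |>.absolutelyContinuousOnInterval
  have hderiv_v : ∀ᵐ t, t ∈ uIoc a b → deriv v t * φ t = f t * φ t := by
    filter_upwards [hf.ae_hasDerivAt_integral] with t ht htab
    rw [funext hv, ((ht (uIoc_subset_uIcc htab) a left_mem_uIcc).const_add _).deriv]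
  rw [← intervalIntegral.integral_congr_ae hderiv_v, ← hderiv_φ,
    hvAC.integral_mul_deriv_eq_deriv_mul hφAC]
  ring

theorem IsPeriodicSol.integral_mul_comp_eq_neg {T : ℝ} {F G : ℝ → ℝ → ℝ} {u v ψ ψ' : ℝ → ℝ}
    (hsol : IsPeriodicSol T F G u v) (hF : Continuous fun t => F t (v t))
    (hψ : ∀ t, HasDerivAt ψ (ψ' (u t)) (u t)) (hψ' : Continuous fun t => ψ' (u t)) :
    ∫ t in (0:ℝ)..T, G t (u t) * ψ (u t) = -∫ t in (0:ℝ)..T, v t * (ψ' (u t) * F t (v t)) := by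
  obtain ⟨-, -, hu_per, hv_per, -, hG, hu, hv⟩ := hsol
  have hu_deriv := hasDerivAt_of_eq_add_integral hF hu
  rw [integral_mul_eq_sub_sub_of_eq_add_integral (φ := fun t => ψ (u t)) (hG 0 T) hv
    (fun t => (hψ t).comp t (hu_deriv t)) (hψ'.mul hF)]
  simp only [← hu_per.eq, ← hv_per.eq, sub_self, zero_sub]

theorem IsPeriodicSol.integral_div_eq {T : ℝ} {F G : ℝ → ℝ → ℝ} {u v g : ℝ → ℝ}
    (hsol : IsPeriodicSol T F G u v) (hF : Continuous fun t => F t (v t))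
    (hg : ContDiffOn ℝ 1 g (Ioi 0)) (hu : ∀ t, 0 < u t) (hgu : ∀ t, g (u t) ≠ 0) :
    ∫ t in (0:ℝ)..T, G t (u t) / g (u t)
      = ∫ t in (0:ℝ)..T, v t * F t (v t) * (deriv g (u t) / g (u t) ^ 2) := by
  have hg_comp : Continuous fun t => g (u t) := hg.continuousOn.comp_continuous hsol.1 hu
  have hg'_comp : Continuous fun t => deriv g (u t) :=
    (hg.continuousOn_deriv_of_isOpen isOpen_Ioi le_rfl).comp_continuous hsol.1 hu
  have key := hsol.integral_mul_comp_eq_neg (ψ := fun s => (g s)⁻¹)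
    (ψ' := fun s => -deriv g s / g s ^ 2) hF
    (fun t => ((hg.differentiableOn one_ne_zero).differentiableAt
      (Ioi_mem_nhds (hu t))).hasDerivAt.fun_inv (hgu t))
    (hg'_comp.neg.div (hg_comp.pow 2) fun t => pow_ne_zero _ (hgu t))
  simp only [div_eq_mul_inv, key, ← intervalIntegral.integral_neg]
  exact intervalIntegral.integral_congr fun t _ => by ring

theorem mul_apply_nonneg_of_monotone {k : ℝ → ℝ} (hk : Monotone k) (hk0 : k 0 = 0) (x : ℝ) :
    0 ≤ x * k x := by
  rcases le_total x 0 with hx | hx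
  · exact mul_nonneg_of_nonpos_of_nonpos hx (hk0 ▸ hk hx)
  · exact mul_nonneg hx (hk0 ▸ hk hx)

theorem mul_apply_pos_of_strictMono {k : ℝ → ℝ} (hk : StrictMono k) (hk0 : k 0 = 0) {x : ℝ}
    (hx : x ≠ 0) : 0 < x * k x := by
  rcases hx.lt_or_gt with hx | hx
  · exact mul_pos_of_neg_of_neg hx (hk0 ▸ hk hx)
  · exact mul_pos hx (hk0 ▸ hk hx)

theorem Function.Periodic.integral_pos_of_pos_of_ne_zero {T : ℝ} {v f : ℝ → ℝ}
    (hv : Function.Periodic v T) (hT : 0 < T) (hv0 : ∃ t, v t ≠ 0) (hf : Continuous f)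
    (hf0 : ∀ t, 0 ≤ f t) (hfv : ∀ t, v t ≠ 0 → 0 < f t) : 0 < ∫ t in (0:ℝ)..T, f t := by
  obtain ⟨t, ht⟩ := hv0
  obtain ⟨t₀, ht₀, hvt₀⟩ := hv.exists_mem_Ico₀ hT t
  exact intervalIntegral.integral_pos hT hf.continuousOn (fun x _ => hf0 x)
    ⟨t₀, Ico_subset_Icc_self ht₀, hfv t₀ (hvt₀ ▸ ht)⟩

theorem statement13_general
    (T : ℝ) (hT : 0 < T) (lam : ℝ) (hlam : 0 < lam)
    (h : ℝ → ℝ → ℝ) (hhc : Continuous (Function.uncurry h))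
    (hh0 : ∀ t : ℝ, h t 0 = 0)
    (hh1 : ∀ t : ℝ, StrictMono (h t))
    (a : ℝ → ℝ)
    (g : ℝ → ℝ) (hgdiff : ContDiffOn ℝ 1 g (Set.Ioi 0))
    (hgpos : ∀ s : ℝ, 0 < s → 0 < g s)
    (hg'pos : ∀ s : ℝ, 0 < s → 0 < deriv g s)
    (u v : ℝ → ℝ)
    (hsol : IsPeriodicSol T h (fun t x => -(lam * a t * g x)) u v)
    (hupos : ∀ t, 0 < u t)
    (hvnt : ¬ (∀ t : ℝ, v t = 0)) :
    (∫ t in (0:ℝ)..T, a t) < 0 := by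
  have ⟨hu, hv, _, hv_per, _⟩ := hsol
  have hgu t : 0 < g (u t) := hgpos _ (hupos t)
  have hhv : Continuous fun t => h t (v t) := hhc.comp (continuous_id.prodMk hv)
  have hweight : Continuous fun t => deriv g (u t) / g (u t) ^ 2 :=
    ((hgdiff.continuousOn_deriv_of_isOpen isOpen_Ioi le_rfl).comp_continuous hu hupos).div
      ((hgdiff.continuousOn.comp_continuous hu hupos).pow 2) fun t => (pow_pos (hgu t) 2).ne'
  have hpos : 0 < -(lam * ∫ t in (0:ℝ)..T, a t) := calc
    0 < ∫ t in (0:ℝ)..T, v t * h t (v t) * (deriv g (u t) / g (u t) ^ 2) :=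
      hv_per.integral_pos_of_pos_of_ne_zero hT (not_forall.1 hvnt) ((hv.mul hhv).mul hweight)
        (fun t => mul_nonneg (mul_apply_nonneg_of_monotone (hh1 t).monotone (hh0 t) _)
          (div_nonneg (hg'pos _ (hupos t)).le (pow_pos (hgu t) 2).le))
        (fun t ht => mul_pos (mul_apply_pos_of_strictMono (hh1 t) (hh0 t) ht)
          (div_pos (hg'pos _ (hupos t)) (pow_pos (hgu t) 2)))
    _ = ∫ t in (0:ℝ)..T, -(lam * a t * g (u t)) / g (u t) :=
      (hsol.integral_div_eq hhv hgdiff hupos fun t => (hgu t).ne').symm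
    _ = -(lam * ∫ t in (0:ℝ)..T, a t) := by
      rw [← intervalIntegral.integral_const_mul, ← intervalIntegral.integral_neg]
      exact intervalIntegral.integral_congr fun t _ => by field_simp [(hgu t).ne']
  exact neg_of_mul_neg_right (neg_pos.1 hpos) hlam.le

theorem statement13
    (T : ℝ) (hT : 0 < T) (lam : ℝ) (hlam : 0 < lam)
    (h : ℝ → ℝ → ℝ) (hhc : Continuous (Function.uncurry h))
    (hhper : ∀ t s : ℝ, h (t + T) s = h t s)
    (hh0 : ∀ t : ℝ, h t 0 = 0)
    (hh1 : ∀ t : ℝ, StrictMono (h t))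
    (a : ℝ → ℝ) (haloc : LocallyIntegrable a volume)
    (haper : Function.Periodic a T)
    (g : ℝ → ℝ) (hgdiff : ContDiffOn ℝ 1 g (Set.Ioi 0))
    (hgpos : ∀ s : ℝ, 0 < s → 0 < g s)
    (hg'pos : ∀ s : ℝ, 0 < s → 0 < deriv g s)
    (u v : ℝ → ℝ)
    (hsol : IsPeriodicSol T h (fun t x => -(lam * a t * g x)) u v)
    (hupos : ∀ t, 0 < u t)
    (hvnt : ¬ (∀ t : ℝ, v t = 0)) :
    (∫ t in (0:ℝ)..T, a t) < 0 :=
  statement13_general T hT lam hlam h hhc hh0 hh1 a g hgdiff hgpos hg'pos u v hsol hupos hvnt
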